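/- arXiv:1810.09872 — 2 statements merged into one kernel-verified Lean document; each statement's English description precedes it below -/
import Mathlib

section
/- Descent inequality along the direction toward the true signal: with F as in the binary-CS functional and y = A x̃, for z ∈ {0,1}^n, z ≠ x̃, and h = -ε(z - x̃) with 0 < ε ≤ 1, F(z+h) - F(z) ≤ ε(ε/2 - 1)(‖A(z - x̃)‖₂² - λ‖z - x̃‖₂²). -/
theorem descent_inequality_toward_true_signal (m n : ℕ)
    (A : Matrix (Fin m) (Fin n) ℝ) (lam : ℝ) (hlam : 0 < lam)
    (xt z : Fin n → ℝ)
    (hxt : ∀ i, xt i = 0 ∨ xt i = 1) (hz : ∀ i, z i = 0 ∨ z i = 1)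
    (hne : z ≠ xt) (ε : ℝ) (hε : 0 < ε) (hε1 : ε ≤ 1)
    (F : (Fin n → ℝ) → ℝ)
    (hF : ∀ x, F x = (1 / 2) * ∑ j, (A.mulVec xt j - A.mulVec x j) ^ 2
        + lam * ∑ i, (x i - (x i) ^ 2 / 2)) :
    F (z + (-ε) • (z - xt)) - F z
      ≤ ε * (ε / 2 - 1) *
        (∑ j, (A.mulVec (z - xt) j) ^ 2 - lam * ∑ i, (z i - xt i) ^ 2) := by
  have hsub : ∀ j, A.mulVec (z - xt) j = A.mulVec z j - A.mulVec xt j := by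
    intro j; simp [Matrix.mulVec_sub]
  have hmv : ∀ j, A.mulVec (z + (-ε) • (z - xt)) j
      = A.mulVec z j - ε * A.mulVec (z - xt) j := by
    intro j
    simp [Matrix.mulVec_add, Matrix.mulVec_neg, Matrix.mulVec_smul]
    ring
  have hq : ∑ j, (A.mulVec xt j - A.mulVec (z + (-ε) • (z - xt)) j) ^ 2
      = (ε - 1) ^ 2 * ∑ j, (A.mulVec (z - xt) j) ^ 2 := by
    rw [Finset.mul_sum]
    refine Finset.sum_congr rfl fun j _ => ?_
    rw [hmv j]
    rw [hsub j]
    ring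
  have hq0 : ∑ j, (A.mulVec xt j - A.mulVec z j) ^ 2
      = ∑ j, (A.mulVec (z - xt) j) ^ 2 := by
    refine Finset.sum_congr rfl fun j _ => ?_
    rw [hsub j]; ring
  have hreg : ∑ i, ((z + (-ε) • (z - xt)) i - ((z + (-ε) • (z - xt)) i) ^ 2 / 2)
        - ∑ i, (z i - (z i) ^ 2 / 2)
      ≤ ε * (1 - ε / 2) * ∑ i, (z i - xt i) ^ 2 := by
    rw [Finset.mul_sum, ← Finset.sum_sub_distrib]
    apply Finset.sum_le_sum
    intro i _
    simp only [Pi.add_apply, Pi.smul_apply, Pi.sub_apply, smul_eq_mul]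
    rcases hz i with h1 | h1 <;> rcases hxt i with h2 | h2 <;> rw [h1, h2] <;> nlinarith
  rw [hF, hF, hq, hq0]
  nlinarith [mul_le_mul_of_nonneg_left hreg hlam.le,
    Finset.sum_nonneg (fun j (_ : j ∈ Finset.univ) => sq_nonneg (A.mulVec (z - xt) j))]
end

section
/- If z, x̃ ∈ {0,1}^n with z ≠ x̃, A ∈ ℝ^{m×n}, and ‖A(z - x̃)‖₂² > λ‖z - x̃‖₂², then z is not a local minimum of F(x) = (1/2)‖A x̃ - Ax‖₂² + λ∑_i(x_i - x_i²/2) on [0,1]^n. -/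
theorem binary_point_not_local_min (m n : ℕ)
    (A : Matrix (Fin m) (Fin n) ℝ) (lam : ℝ) (hlam : 0 < lam)
    (xt z : Fin n → ℝ)
    (hxt : ∀ i, xt i = 0 ∨ xt i = 1) (hz : ∀ i, z i = 0 ∨ z i = 1)
    (hne : z ≠ xt)
    (hsep : lam * ∑ i, (z i - xt i) ^ 2 < ∑ j, (A.mulVec (z - xt) j) ^ 2)
    (F : (Fin n → ℝ) → ℝ)
    (hF : ∀ x, F x = (1 / 2) * ∑ j, (A.mulVec xt j - A.mulVec x j) ^ 2
        + lam * ∑ i, (x i - (x i) ^ 2 / 2)) :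
    ¬ IsLocalMinOn F (Set.univ.pi fun _ : Fin n => Set.Icc (0 : ℝ) 1) z := by
  intro hmin
  set d : Fin n → ℝ := z - xt with hd
  set P : ℝ := ∑ j, (A.mulVec d j) ^ 2 with hP
  set D : ℝ := ∑ i, d i ^ 2 with hD
  set S : ℝ := ∑ i, d i * (z i - 1) with hS
  have hdi : ∀ i, d i = z i - xt i := fun i => rfl
  have hSD : S ≤ D := by
    apply Finset.sum_le_sum
    intro i _
    rcases hz i with h | h <;> rcases hxt i with h' | h' <;>
      simp [hdi i, h, h'] <;> norm_num
  have hPD : lam * D < P := hsep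
  -- the key formula for F along the segment
  have hmv : ∀ t : ℝ, A.mulVec (z - t • d) = A.mulVec z - t • A.mulVec d := by
    intro t
    rw [Matrix.mulVec_sub, Matrix.mulVec_smul]
  have hmvd : A.mulVec d = A.mulVec z - A.mulVec xt := Matrix.mulVec_sub A z xt
  have key : ∀ t : ℝ, F (z - t • d)
      = (1 / 2) * ((t - 1) ^ 2 * P)
        + lam * ((∑ i, (z i - (z i) ^ 2 / 2)) + (t * S - t ^ 2 / 2 * D)) := by
    intro t
    rw [hF]
    have h1 : ∑ j, (A.mulVec xt j - A.mulVec (z - t • d) j) ^ 2 = (t - 1) ^ 2 * P := by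
      rw [hP, Finset.mul_sum]
      refine Finset.sum_congr rfl fun j _ => ?_
      have e1 : A.mulVec (z - t • d) j = A.mulVec z j - t * A.mulVec d j := by
        rw [hmv t]; simp
      have e2 : A.mulVec d j = A.mulVec z j - A.mulVec xt j := by
        rw [hmvd]; simp
      rw [e1, e2]; ring
    have h2 : ∑ i, (t * (d i * (z i - 1)) - t ^ 2 / 2 * d i ^ 2) = t * S - t ^ 2 / 2 * D := by
      rw [Finset.sum_sub_distrib, ← Finset.mul_sum, ← Finset.mul_sum]
    have h3 : ∀ i : Fin n, (z - t • d) i - ((z - t • d) i) ^ 2 / 2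
        = (z i - (z i) ^ 2 / 2) + (t * (d i * (z i - 1)) - t ^ 2 / 2 * (d i) ^ 2) := by
      intro i
      simp only [Pi.sub_apply, Pi.smul_apply, smul_eq_mul]
      ring
    rw [h1, Finset.sum_congr rfl fun i _ => h3 i, Finset.sum_add_distrib, h2]
  have hFz : F z = (1 / 2) * P + lam * (∑ i, (z i - (z i) ^ 2 / 2)) := by
    have := key 0
    simpa using this
  have hlt : ∀ t : ℝ, t ∈ Set.Ioc (0 : ℝ) 1 → F (z - t • d) < F z := by
    intro t ht
    rw [key t, hFz]
    have hlamS : lam * S ≤ lam * D := mul_le_mul_of_nonneg_left hSD hlam.le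
    nlinarith [mul_pos ht.1 (sub_pos.2 hPD),
      mul_nonneg (mul_nonneg ht.1.le (sub_nonneg.2 ht.2)) (sub_pos.2 hPD).le]
  -- membership of the segment in the box
  have hmem : ∀ t : ℝ, t ∈ Set.Ioc (0 : ℝ) 1 →
      (z - t • d) ∈ (Set.univ.pi fun _ : Fin n => Set.Icc (0 : ℝ) 1) := by
    intro t ht
    intro i _
    simp only [Pi.sub_apply, Pi.smul_apply, smul_eq_mul, Set.mem_Icc, hdi i]
    rcases hz i with h | h <;> rcases hxt i with h' | h' <;>
      rw [h, h'] <;> constructor <;> nlinarith [ht.1, ht.2]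
  -- pull back the local min along the path
  have hIoc : Set.Ioc (0 : ℝ) 1 ∈ nhdsWithin (0 : ℝ) (Set.Ioi 0) := by
    have : Set.Ioo (0 : ℝ) 1 ∈ nhdsWithin (0 : ℝ) (Set.Ioi 0) :=
      Ioo_mem_nhdsGT_of_mem (by norm_num)
    exact Filter.mem_of_superset this Set.Ioo_subset_Ioc_self
  have hcont : Continuous fun t : ℝ => z - t • d :=
    continuous_const.sub (continuous_id.smul continuous_const)
  have htend : Filter.Tendsto (fun t : ℝ => z - t • d) (nhdsWithin 0 (Set.Ioi 0))
      (nhdsWithin z (Set.univ.pi fun _ : Fin n => Set.Icc (0 : ℝ) 1)) := by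
    rw [tendsto_nhdsWithin_iff]
    constructor
    · have := (hcont.tendsto 0).mono_left (nhdsWithin_le_nhds (s := Set.Ioi (0 : ℝ)))
      simpa using this
    · filter_upwards [hIoc] with t ht using hmem t ht
  have hev : ∀ᶠ t in nhdsWithin (0 : ℝ) (Set.Ioi 0), F z ≤ F (z - t • d) :=
    htend.eventually hmin
  have : ∀ᶠ t in nhdsWithin (0 : ℝ) (Set.Ioi 0), False := by
    filter_upwards [hev, hIoc] with t h1 h2
    exact absurd h1 (not_le.2 (hlt t h2))
  obtain ⟨t, ht⟩ := this.exists
  exact ht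
end
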